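/- arXiv:1201.0533 — 2 statements merged into one kernel-verified Lean document; each statement's English description precedes it below -/
import Mathlib

section
/- Let {X_k, F_k}_{k≥0} be a discrete-time real-valued conditionally symmetric martingale, and let m be a positive even integer. Assume that almost surely, for every k ≥ 1, |X_k − X_{k−1}| ≤ d and E[(X_k − X_{k−1})^l | F_{k−1}] ≤ μ_l for every even l ∈ {2, 4, …, m}, for some d > 0 and nonnegative numbers μ_2, μ_4, …, μ_m. Set δ = α/d and γ_{2l} = μ_{2l}/d^{2l} for l = 1, …, m/2. Then for every α ≥ 0 and n ≥ 1, P( max_{1≤k≤n} |X_k − X_0| ≥ αn ) ≤ 2 [ min_{x≥0} e^{−δx} ( 1 + Σ_{l=1}^{m/2−1} (γ_{2l} − γ_m) x^{2l}/(2l)! + γ_m (cosh(x) − 1) ) ]^n. -/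
/-!
Write `ξₖ = Xₖ - Xₖ₋₁` and `t = x / d`. Conditional symmetry turns `E[exp (± t ξₖ) | Fₖ₋₁]` into
`E[cosh (t ξₖ) | Fₖ₋₁] ≥ 1`, so both `exp (± t (Xₖ - X₀))` are nonnegative submartingales.
As `|ξₖ / d| ≤ 1`, the Taylor tail of `cosh` beyond degree `m - 2` at `t ξₖ` is at most
`(ξₖ / d) ^ m` times the tail at `t d`. This bounds `cosh (t ξₖ)` by a polynomial in
`(ξₖ / d) ^ 2, …, (ξₖ / d) ^ m` with nonnegative coefficients, and the conditional moment bounds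
give `E[cosh (t ξₖ) | Fₖ₋₁] ≤ B(x)`, the bracket of the statement. Hence
`E exp (t (Xₙ - X₀)) ≤ B(x) ^ n`, and Doob's maximal inequality for both signs gives the bound
`2 (exp (-δ x) B(x)) ^ n` for each `x ≥ 0`, which passes to the infimum by continuity.
-/

open MeasureTheory ProbabilityTheory Filter Set Real
open scoped Nat ENNReal

noncomputable section

def coshTaylor (M : ℕ) (x : ℝ) : ℝ := ∑ l ∈ Finset.range M, x ^ (2 * l) / (2 * l)!

def coshWeight (M : ℕ) (x : ℝ) (l : ℕ) : ℝ :=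
  if l < M then x ^ (2 * l) / (2 * l)! else cosh x - coshTaylor M x

def evenMomentBound (γ : ℕ → ℝ) (M : ℕ) (x : ℝ) : ℝ :=
  1 + ∑ l ∈ Finset.Icc 1 (M - 1), (γ l - γ M) * x ^ (2 * l) / (2 * l)! + γ M * (cosh x - 1)

end

lemma cosh_sub_coshTaylor_eq_tsum (M : ℕ) (x : ℝ) :
    cosh x - coshTaylor M x = ∑' j, x ^ (2 * (j + M)) / (2 * (j + M))! := by
  rw [cosh_eq_tsum, ← (hasSum_cosh x).summable.sum_add_tsum_nat_add M, coshTaylor,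
    add_sub_cancel_left]

lemma coshTaylor_le_cosh (M : ℕ) (x : ℝ) : coshTaylor M x ≤ cosh x := by
  rw [← sub_nonneg, cosh_sub_coshTaylor_eq_tsum]
  exact tsum_nonneg fun j => by rw [pow_mul]; positivity

lemma cosh_mul_sub_coshTaylor_le {r : ℝ} (hr : |r| ≤ 1) (M : ℕ) (x : ℝ) :
    cosh (r * x) - coshTaylor M (r * x) ≤ r ^ (2 * M) * (cosh x - coshTaylor M x) := by
  have summable_tail (y : ℝ) := (summable_nat_add_iff M).2 (hasSum_cosh y).summable
  rw [cosh_sub_coshTaylor_eq_tsum, cosh_sub_coshTaylor_eq_tsum, ← tsum_mul_left]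
  refine (summable_tail _).tsum_le_tsum (fun j => ?_) ((summable_tail x).mul_left _)
  have hrj : r ^ (2 * j) ≤ 1 := by
    rw [pow_mul]
    exact pow_le_one₀ (sq_nonneg r) (by nlinarith [abs_le.mp hr])
  calc (r * x) ^ (2 * (j + M)) / (2 * (j + M))!
      = r ^ (2 * M) * (r ^ (2 * j) * (x ^ (2 * (j + M)) / (2 * (j + M))!)) := by ring
    _ ≤ r ^ (2 * M) * (1 * (x ^ (2 * (j + M)) / (2 * (j + M))!)) := by
      rw [pow_mul r, pow_mul x]; gcongr
    _ = r ^ (2 * M) * (x ^ (2 * (j + M)) / (2 * (j + M))!) := by rw [one_mul]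

lemma coshTaylor_eq_one_add {M : ℕ} (hM : 1 ≤ M) (x : ℝ) :
    coshTaylor M x = 1 + ∑ l ∈ Finset.Ico 1 M, x ^ (2 * l) / (2 * l)! := by
  rw [coshTaylor, Finset.range_eq_Ico, Finset.sum_eq_sum_Ico_succ_bot hM]
  simp

lemma coshWeight_of_lt {M l : ℕ} (hl : l < M) (x : ℝ) : coshWeight M x l = x ^ (2 * l) / (2 * l)! :=
  if_pos hl

lemma coshWeight_self (M : ℕ) (x : ℝ) : coshWeight M x M = cosh x - coshTaylor M x :=
  if_neg (lt_irrefl M)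

lemma coshWeight_nonneg (M : ℕ) (x : ℝ) (l : ℕ) : 0 ≤ coshWeight M x l := by
  unfold coshWeight
  split_ifs
  · rw [pow_mul]; positivity
  · exact sub_nonneg.2 (coshTaylor_le_cosh M x)

lemma evenMomentBound_eq {M : ℕ} (hM : 1 ≤ M) (γ : ℕ → ℝ) (x : ℝ) :
    evenMomentBound γ M x = 1 + ∑ l ∈ Finset.Ico 1 (M + 1), coshWeight M x l * γ l := by
  have hIcc : Finset.Icc 1 (M - 1) = Finset.Ico 1 M := by
    ext l; simp only [Finset.mem_Icc, Finset.mem_Ico]; omega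
  have hTerms : ∑ l ∈ Finset.Ico 1 M, coshWeight M x l * γ l
      = ∑ l ∈ Finset.Ico 1 M, x ^ (2 * l) / (2 * l)! * γ l :=
    Finset.sum_congr rfl fun l hl => by rw [coshWeight_of_lt (Finset.mem_Ico.1 hl).2]
  have hSplit : ∑ l ∈ Finset.Ico 1 M, (γ l - γ M) * x ^ (2 * l) / (2 * l)!
      = ∑ l ∈ Finset.Ico 1 M, x ^ (2 * l) / (2 * l)! * γ l
        - γ M * ∑ l ∈ Finset.Ico 1 M, x ^ (2 * l) / (2 * l)! := by
    rw [Finset.mul_sum, ← Finset.sum_sub_distrib]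
    exact Finset.sum_congr rfl fun _ _ => by ring
  rw [evenMomentBound, Finset.sum_Ico_succ_top hM, hTerms, coshWeight_self, hIcc, hSplit,
    coshTaylor_eq_one_add hM]
  ring

lemma one_le_evenMomentBound {M : ℕ} (hM : 1 ≤ M) {γ : ℕ → ℝ}
    (hγ : ∀ l ∈ Finset.Ico 1 (M + 1), 0 ≤ γ l) (x : ℝ) : 1 ≤ evenMomentBound γ M x := by
  rw [evenMomentBound_eq hM, le_add_iff_nonneg_right]
  exact Finset.sum_nonneg fun l hl => mul_nonneg (coshWeight_nonneg M x l) (hγ l hl)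

lemma cosh_mul_le_evenMomentBound {M : ℕ} (hM : 1 ≤ M) {u : ℝ} (hu : |u| ≤ 1) (x : ℝ) :
    cosh (u * x) ≤ evenMomentBound (fun l => u ^ (2 * l)) M x := by
  have hTaylor :
      coshTaylor M (u * x) = 1 + ∑ l ∈ Finset.Ico 1 M, coshWeight M x l * u ^ (2 * l) := by
    rw [coshTaylor_eq_one_add hM]
    congr 1
    exact Finset.sum_congr rfl fun l hl => by
      rw [coshWeight_of_lt (Finset.mem_Ico.1 hl).2, mul_pow]; ring
  rw [evenMomentBound_eq hM, Finset.sum_Ico_succ_top hM, coshWeight_self]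
  linarith [cosh_mul_sub_coshTaylor_le hu M x]

section ConditionalBounds

variable {Ω : Type*} {m m0 : MeasurableSpace Ω} {μ : Measure Ω}

lemma integrable_comp_of_abs_le [IsFiniteMeasure μ] {f : Ω → ℝ} (hf : AEStronglyMeasurable f μ)
    {d : ℝ} (hbdd : ∀ᵐ ω ∂μ, |f ω| ≤ d) {g : ℝ → ℝ} (hg : Continuous g) :
    Integrable (fun ω => g (f ω)) μ := by
  obtain ⟨C, hC⟩ := (isCompact_Icc (a := -d) (b := d)).exists_bound_of_continuousOn hg.continuousOn
  refine Integrable.of_bound (hg.comp_aestronglyMeasurable hf) C ?_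
  filter_upwards [hbdd] with ω hω using hC _ (abs_le.1 hω)

lemma condExp_sum_mul_le {ι : Type*} {s : Finset ι} {a b : ι → ℝ} {f : ι → Ω → ℝ}
    (ha : ∀ i ∈ s, 0 ≤ a i) (hf : ∀ i ∈ s, Integrable (f i) μ)
    (hb : ∀ i ∈ s, μ[f i|m] ≤ᵐ[μ] fun _ => b i) :
    μ[fun ω => ∑ i ∈ s, a i * f i ω|m] ≤ᵐ[μ] fun _ => ∑ i ∈ s, a i * b i := by
  have hfun : (fun ω => ∑ i ∈ s, a i * f i ω) = ∑ i ∈ s, a i • f i := by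
    ext ω; simp [Finset.sum_apply]
  rw [hfun]
  filter_upwards [condExp_finsetSum (fun i hi => (hf i hi).smul (a i)) m,
    (eventually_all_finset s).2 fun i _ => condExp_smul (a i) (f i) m,
    (eventually_all_finset s).2 hb] with ω hsum hsmul hle
  rw [hsum, Finset.sum_apply]
  refine Finset.sum_le_sum fun i hi => ?_
  rw [hsmul i hi, Pi.smul_apply, smul_eq_mul]
  exact mul_le_mul_of_nonneg_left (hle i hi) (ha i hi)

lemma condExp_cosh_eq_condExp_exp {f : Ω → ℝ} (hpos : Integrable (fun ω => exp (f ω)) μ)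
    (hneg : Integrable (fun ω => exp (-f ω)) μ)
    (hsymm : μ[fun ω => exp (f ω)|m] =ᵐ[μ] μ[fun ω => exp (-f ω)|m]) :
    μ[fun ω => cosh (f ω)|m] =ᵐ[μ] μ[fun ω => exp (f ω)|m] := by
  have hfun : (fun ω => cosh (f ω))
      = (2⁻¹ : ℝ) • ((fun ω => exp (f ω)) + fun ω => exp (-f ω)) := by
    ext ω; simp only [cosh_eq, Pi.smul_apply, Pi.add_apply, smul_eq_mul]; ring
  rw [hfun]
  filter_upwards [condExp_smul (2⁻¹ : ℝ) ((fun ω => exp (f ω)) + fun ω => exp (-f ω)) m,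
    condExp_add hpos hneg m, hsymm] with ω hsmul hadd hs
  rw [hsmul, Pi.smul_apply, hadd, Pi.add_apply, ← hs, smul_eq_mul]
  ring

lemma one_le_condExp_cosh [IsFiniteMeasure μ] (hm : m ≤ m0) {f : Ω → ℝ}
    (hf : Integrable (fun ω => cosh (f ω)) μ) : ∀ᵐ ω ∂μ, 1 ≤ μ[fun ω => cosh (f ω)|m] ω := by
  have h := condExp_mono (m := m) (integrable_const (1 : ℝ)) hf (ae_of_all _ fun ω => one_le_cosh _)
  rwa [condExp_const hm] at h

lemma condExp_cosh_mul_le_evenMomentBound [IsFiniteMeasure μ] (hm : m ≤ m0) {ξ : Ω → ℝ}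
    (hξ : AEStronglyMeasurable ξ μ) {d : ℝ} (hd : 0 < d) (hbdd : ∀ᵐ ω ∂μ, |ξ ω| ≤ d)
    {M : ℕ} (hM : 1 ≤ M) {ν : ℕ → ℝ}
    (hν : ∀ l ∈ Finset.Ico 1 (M + 1), μ[fun ω => ξ ω ^ (2 * l)|m] ≤ᵐ[μ] fun _ => ν l) (t : ℝ) :
    μ[fun ω => cosh (t * ξ ω)|m] ≤ᵐ[μ]
      fun _ => evenMomentBound (fun l => ν l / d ^ (2 * l)) M (t * d) := by
  set a : ℕ → ℝ := fun l => coshWeight M (t * d) l / d ^ (2 * l)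
  have hpow (l : ℕ) : Integrable (fun ω => ξ ω ^ (2 * l)) μ :=
    integrable_comp_of_abs_le hξ hbdd (continuous_pow _)
  have hpoly : Integrable (fun ω => ∑ l ∈ Finset.Ico 1 (M + 1), a l * ξ ω ^ (2 * l)) μ :=
    integrable_finsetSum _ fun l _ => (hpow l).const_mul (a l)
  have hpointwise : (fun ω => cosh (t * ξ ω))
      ≤ᵐ[μ] (fun _ => (1 : ℝ)) + fun ω => ∑ l ∈ Finset.Ico 1 (M + 1), a l * ξ ω ^ (2 * l) := by
    filter_upwards [hbdd] with ω hω
    have hu : |ξ ω / d| ≤ 1 := by rwa [abs_div, abs_of_pos hd, div_le_one hd]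
    have h := cosh_mul_le_evenMomentBound hM hu (t * d)
    rw [evenMomentBound_eq hM] at h
    calc cosh (t * ξ ω) = cosh (ξ ω / d * (t * d)) := by field_simp
      _ ≤ _ := h
      _ = _ := by
        simp only [Pi.add_apply, a, div_pow]
        congr 1
        exact Finset.sum_congr rfl fun l _ => by ring
  filter_upwards [condExp_mono (m := m) ((integrable_comp_of_abs_le hξ hbdd
      (continuous_cosh.comp (continuous_const_mul t)))) ((integrable_const _).add hpoly) hpointwise,
    condExp_add (m := m) (integrable_const (1 : ℝ)) hpoly,
    condExp_sum_mul_le (m := m) (a := a) (fun l _ => div_nonneg (coshWeight_nonneg M (t * d) l)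
      (by positivity)) (fun l _ => hpow l) hν] with ω hmono hadd hsum
  rw [hadd, Pi.add_apply, condExp_const hm] at hmono
  refine hmono.trans ?_
  rw [evenMomentBound_eq hM, add_le_add_iff_left]
  refine hsum.trans_eq (Finset.sum_congr rfl fun l _ => ?_)
  simp only [a]
  ring

end ConditionalBounds

section ExponentialProcess

variable {Ω : Type*} {m0 : MeasurableSpace Ω} {μ : Measure Ω} {F : Filtration ℕ m0}
  {X : ℕ → Ω → ℝ} {d t B : ℝ}

lemma MeasureTheory.Submartingale.measure_exists_le_le [IsFiniteMeasure μ] {f : ℕ → Ω → ℝ}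
    (hf : Submartingale f F μ) (hnonneg : 0 ≤ f) {ε : ℝ} (hε : 0 < ε) (n : ℕ) :
    μ {ω | ∃ k ≤ n, ε ≤ f k ω} ≤ ENNReal.ofReal ((∫ ω, f n ω ∂μ) / ε) := by
  set E := {ω | (ε.toNNReal : ℝ) ≤ (Finset.range (n + 1)).sup' Finset.nonempty_range_add_one
    fun k => f k ω}
  have hsub : {ω | ∃ k ≤ n, ε ≤ f k ω} ⊆ E := by
    rintro ω ⟨k, hk, hεk⟩
    simp only [E, Set.mem_ofPred_eq, Real.coe_toNNReal _ hε.le]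
    exact Finset.le_sup'_of_le _ (Finset.mem_range_succ_iff.2 hk) hεk
  have hdoob : ENNReal.ofReal ε * μ E ≤ ENNReal.ofReal (∫ ω, f n ω ∂μ) :=
    (maximal_ineq hf hnonneg n).trans (ENNReal.ofReal_le_ofReal
      (setIntegral_le_integral (hf.integrable n) (ae_of_all _ (hnonneg n))))
  rw [ENNReal.ofReal_div_of_pos hε]
  refine (measure_mono hsub).trans ?_
  rwa [ENNReal.le_div_iff_mul_le (Or.inl (ENNReal.ofReal_pos.2 hε).ne')
    (Or.inl ENNReal.ofReal_ne_top), mul_comm]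

lemma MeasureTheory.StronglyAdapted.aestronglyMeasurable_sub (hX : StronglyAdapted F X) (i j : ℕ) :
    AEStronglyMeasurable (fun ω => X i ω - X j ω) μ :=
  (((hX i).mono (F.le i) : StronglyMeasurable (X i)).sub
    ((hX j).mono (F.le j))).aestronglyMeasurable

lemma ae_abs_sub_zero_le_mul (hbdd : ∀ k, ∀ᵐ ω ∂μ, |X (k + 1) ω - X k ω| ≤ d) (k : ℕ) :
    ∀ᵐ ω ∂μ, |X k ω - X 0 ω| ≤ k * d := by
  induction k with
  | zero => simp
  | succ k ih =>
    filter_upwards [ih, hbdd k] with ω hk hstep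
    calc |X (k + 1) ω - X 0 ω| = |(X k ω - X 0 ω) + (X (k + 1) ω - X k ω)| := by ring_nf
      _ ≤ k * d + d := (abs_add_le _ _).trans (add_le_add hk hstep)
      _ = (k + 1 : ℕ) * d := by push_cast; ring

lemma integrable_exp_mul_sub_zero [IsFiniteMeasure μ] (hX : StronglyAdapted F X)
    (hbdd : ∀ k, ∀ᵐ ω ∂μ, |X (k + 1) ω - X k ω| ≤ d) (t : ℝ) (k : ℕ) :
    Integrable (fun ω => exp (t * (X k ω - X 0 ω))) μ :=
  integrable_comp_of_abs_le (hX.aestronglyMeasurable_sub k 0) (ae_abs_sub_zero_le_mul hbdd k)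
    (continuous_exp.comp (continuous_const_mul t))

lemma stronglyAdapted_exp_mul_sub_zero (hX : StronglyAdapted F X) (t : ℝ) :
    StronglyAdapted F fun k ω => exp (t * (X k ω - X 0 ω)) := fun k =>
  continuous_exp.comp_stronglyMeasurable
    (((hX k).sub ((hX 0).mono (F.mono (Nat.zero_le k)))).const_mul t)

lemma condExp_exp_mul_sub_zero_succ [IsFiniteMeasure μ] (hX : StronglyAdapted F X)
    (hbdd : ∀ k, ∀ᵐ ω ∂μ, |X (k + 1) ω - X k ω| ≤ d) (t : ℝ) (k : ℕ) :
    μ[fun ω => exp (t * (X (k + 1) ω - X 0 ω))|F k] =ᵐ[μ]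
      fun ω => exp (t * (X k ω - X 0 ω)) * μ[fun ω => exp (t * (X (k + 1) ω - X k ω))|F k] ω := by
  have hmul : (fun ω => exp (t * (X (k + 1) ω - X 0 ω)))
      = (fun ω => exp (t * (X k ω - X 0 ω))) * fun ω => exp (t * (X (k + 1) ω - X k ω)) := by
    ext ω; rw [Pi.mul_apply, ← exp_add]; ring_nf
  have hstep : Integrable (fun ω => exp (t * (X (k + 1) ω - X k ω))) μ :=
    integrable_comp_of_abs_le (hX.aestronglyMeasurable_sub (k + 1) k) (hbdd k)
      (continuous_exp.comp (continuous_const_mul t))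
  rw [hmul]
  exact condExp_mul_of_stronglyMeasurable_left (stronglyAdapted_exp_mul_sub_zero hX t k)
    (hmul ▸ integrable_exp_mul_sub_zero hX hbdd t (k + 1)) hstep

lemma submartingale_exp_mul_sub_zero [IsFiniteMeasure μ] (hX : StronglyAdapted F X)
    (hbdd : ∀ k, ∀ᵐ ω ∂μ, |X (k + 1) ω - X k ω| ≤ d)
    (hone : ∀ k, ∀ᵐ ω ∂μ, 1 ≤ μ[fun ω => exp (t * (X (k + 1) ω - X k ω))|F k] ω) :
    Submartingale (fun k ω => exp (t * (X k ω - X 0 ω))) F μ := by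
  refine submartingale_nat (stronglyAdapted_exp_mul_sub_zero hX t)
    (integrable_exp_mul_sub_zero hX hbdd t) fun k => ?_
  filter_upwards [condExp_exp_mul_sub_zero_succ hX hbdd t k, hone k] with ω hmul h1
  rw [hmul]
  exact le_mul_of_one_le_right (exp_pos _).le h1

lemma integral_exp_mul_sub_zero_le_pow [IsProbabilityMeasure μ] (hX : StronglyAdapted F X)
    (hbdd : ∀ k, ∀ᵐ ω ∂μ, |X (k + 1) ω - X k ω| ≤ d) (hB : 0 ≤ B)
    (hle : ∀ k, ∀ᵐ ω ∂μ, μ[fun ω => exp (t * (X (k + 1) ω - X k ω))|F k] ω ≤ B) (n : ℕ) :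
    ∫ ω, exp (t * (X n ω - X 0 ω)) ∂μ ≤ B ^ n := by
  induction n with
  | zero => simp
  | succ k ih =>
    calc ∫ ω, exp (t * (X (k + 1) ω - X 0 ω)) ∂μ
        = ∫ ω, μ[fun ω => exp (t * (X (k + 1) ω - X 0 ω))|F k] ω ∂μ :=
          (integral_condExp (F.le k)).symm
      _ ≤ ∫ ω, exp (t * (X k ω - X 0 ω)) * B ∂μ := by
          refine integral_mono_ae integrable_condExp
            ((integrable_exp_mul_sub_zero hX hbdd t k).mul_const B) ?_
          filter_upwards [condExp_exp_mul_sub_zero_succ hX hbdd t k, hle k] with ω hmul hω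
          rw [hmul]
          exact mul_le_mul_of_nonneg_left hω (exp_pos _).le
      _ ≤ B ^ k * B := by rw [integral_mul_const]; exact mul_le_mul_of_nonneg_right ih hB
      _ = B ^ (k + 1) := (pow_succ B k).symm

lemma measure_exists_le_sub_zero_le [IsProbabilityMeasure μ] (hX : StronglyAdapted F X)
    (ht : 0 ≤ t) (hbdd : ∀ k, ∀ᵐ ω ∂μ, |X (k + 1) ω - X k ω| ≤ d)
    (hcond : ∀ k, ∀ᵐ ω ∂μ, 1 ≤ μ[fun ω => exp (t * (X (k + 1) ω - X k ω))|F k] ω ∧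
      μ[fun ω => exp (t * (X (k + 1) ω - X k ω))|F k] ω ≤ B) (a : ℝ) (n : ℕ) :
    μ {ω | ∃ k ≤ n, a ≤ X k ω - X 0 ω} ≤ ENNReal.ofReal (exp (-(t * a)) * B ^ n) := by
  obtain ⟨ω, hone, hB⟩ := (hcond 0).exists
  have hsub : {ω | ∃ k ≤ n, a ≤ X k ω - X 0 ω}
      ⊆ {ω | ∃ k ≤ n, exp (t * a) ≤ exp (t * (X k ω - X 0 ω))} := by
    rintro ω ⟨k, hk, ha⟩
    exact ⟨k, hk, exp_le_exp.2 (mul_le_mul_of_nonneg_left ha ht)⟩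
  have hsubmart := submartingale_exp_mul_sub_zero hX hbdd fun k => (hcond k).mono fun _ h => h.1
  refine (measure_mono hsub).trans ((hsubmart.measure_exists_le_le (fun k ω => (exp_pos _).le)
    (exp_pos _) n).trans (ENNReal.ofReal_le_ofReal ?_))
  rw [div_eq_mul_inv, ← exp_neg, mul_comm]
  exact mul_le_mul_of_nonneg_left (integral_exp_mul_sub_zero_le_pow hX hbdd (by linarith)
    (fun k => (hcond k).mono fun _ h => h.2) n) (exp_pos _).le

lemma measure_exists_le_abs_sub_zero_le [IsProbabilityMeasure μ] (hX : StronglyAdapted F X)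
    (ht : 0 ≤ t) (hbdd : ∀ k, ∀ᵐ ω ∂μ, |X (k + 1) ω - X k ω| ≤ d)
    (hsymm : ∀ k, μ[fun ω => exp (t * (X (k + 1) ω - X k ω))|F k]
      =ᵐ[μ] μ[fun ω => exp (-(t * (X (k + 1) ω - X k ω)))|F k])
    (hB : ∀ k, ∀ᵐ ω ∂μ, μ[fun ω => cosh (t * (X (k + 1) ω - X k ω))|F k] ω ≤ B)
    (a : ℝ) (n : ℕ) :
    μ {ω | ∃ k ≤ n, a ≤ |X k ω - X 0 ω|} ≤ ENNReal.ofReal (2 * (exp (-(t * a)) * B ^ n)) := by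
  have hint (k : ℕ) {g : ℝ → ℝ} (hg : Continuous g) :
      Integrable (fun ω => g (t * (X (k + 1) ω - X k ω))) μ :=
    integrable_comp_of_abs_le (hX.aestronglyMeasurable_sub (k + 1) k) (hbdd k)
      (hg.comp (continuous_const_mul t))
  have hcosh (k : ℕ) := condExp_cosh_eq_condExp_exp (f := fun ω => t * (X (k + 1) ω - X k ω))
    (hint k continuous_exp) (hint k (continuous_exp.comp continuous_neg)) (hsymm k)
  have hcond (k : ℕ) := (one_le_condExp_cosh (F.le k) (hint k continuous_cosh)).and (hB k)
  have hneg (k : ℕ) : (fun ω => exp (t * ((-X) (k + 1) ω - (-X) k ω)))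
      = fun ω => exp (-(t * (X (k + 1) ω - X k ω))) := by
    ext ω; simp only [Pi.neg_apply]; ring_nf
  have hupper := measure_exists_le_sub_zero_le hX ht hbdd (fun k => by
    filter_upwards [hcond k, hcosh k] with ω h e
    rwa [← e]) a n
  have hlower := measure_exists_le_sub_zero_le (X := -X) (fun k => (hX k).neg) ht
    (by simpa only [Pi.neg_apply, neg_sub_neg, abs_sub_comm] using hbdd) (fun k => by
      filter_upwards [hcond k, hcosh k, hsymm k] with ω h e s
      rwa [hneg, ← s, ← e]) a n
  obtain ⟨_, hone, hle⟩ := (hcond 0).exists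
  have hB0 : 0 ≤ B := by linarith
  have hsub : {ω | ∃ k ≤ n, a ≤ |X k ω - X 0 ω|} ⊆
      {ω | ∃ k ≤ n, a ≤ X k ω - X 0 ω} ∪ {ω | ∃ k ≤ n, a ≤ (-X) k ω - (-X) 0 ω} := by
    rintro ω ⟨k, hk, ha⟩
    rcases le_abs'.1 ha with h | h
    · exact Or.inr ⟨k, hk, by simp only [Pi.neg_apply]; linarith⟩
    · exact Or.inl ⟨k, hk, h⟩
  have hnonneg : 0 ≤ exp (-(t * a)) * B ^ n := by positivity
  calc μ {ω | ∃ k ≤ n, a ≤ |X k ω - X 0 ω|}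
      ≤ μ {ω | ∃ k ≤ n, a ≤ X k ω - X 0 ω} + μ {ω | ∃ k ≤ n, a ≤ (-X) k ω - (-X) 0 ω} :=
        (measure_mono hsub).trans (measure_union_le _ _)
    _ ≤ _ := by rw [two_mul, ENNReal.ofReal_add hnonneg hnonneg]; exact add_le_add hupper hlower

end ExponentialProcess

lemma le_ofReal_apply_csInf {S : Set ℝ} (hne : S.Nonempty) (hbdd : BddBelow S) {g : ℝ → ℝ}
    (hg : Continuous g) {p : ℝ≥0∞} (h : ∀ y ∈ S, p ≤ ENNReal.ofReal (g y)) :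
    p ≤ ENNReal.ofReal (g (sInf S)) :=
  (isClosed_le continuous_const (ENNReal.continuous_ofReal.comp hg)).closure_subset_iff.2 h
    (csInf_mem_closure hne hbdd)

theorem conditionally_symmetric_martingale_moment_bound_general
    {Ω : Type*} {m0 : MeasurableSpace Ω} {μ : Measure Ω} [IsProbabilityMeasure μ]
    {F : Filtration ℕ m0} {X : ℕ → Ω → ℝ}
    (hmart : Martingale X F μ)
    (hsymm : ∀ k : ℕ, 1 ≤ k → ∀ g : ℝ → ℝ, Measurable g →
      μ[fun ω => g (X k ω - X (k - 1) ω) | F (k - 1)]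
        =ᵐ[μ] μ[fun ω => g (-(X k ω - X (k - 1) ω)) | F (k - 1)])
    {m : ℕ} (hm_even : Even m) (hm_pos : 0 < m)
    {d : ℝ} (hd : 0 < d) {μmom : ℕ → ℝ}
    (hμnonneg : ∀ l, 1 ≤ l → l ≤ m / 2 → 0 ≤ μmom (2 * l))
    (hbdd : ∀ k : ℕ, 1 ≤ k → ∀ᵐ ω ∂μ, |X k ω - X (k - 1) ω| ≤ d)
    (hmom : ∀ k : ℕ, 1 ≤ k → ∀ l, 1 ≤ l → l ≤ m / 2 → ∀ᵐ ω ∂μ,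
      (μ[fun ω => (X k ω - X (k - 1) ω) ^ (2 * l) | F (k - 1)]) ω ≤ μmom (2 * l))
    {α : ℝ} (n : ℕ) :
    μ {ω | ∃ k, 1 ≤ k ∧ k ≤ n ∧ α * n ≤ |X k ω - X 0 ω|}
      ≤ ENNReal.ofReal (2 *
          (sInf ((fun x : ℝ => Real.exp (-(α / d) * x) *
            (1 + (∑ l ∈ Finset.Icc 1 (m / 2 - 1),
                (μmom (2 * l) / d ^ (2 * l) - μmom m / d ^ m) * x ^ (2 * l)
                  / (Nat.factorial (2 * l)))
              + (μmom m / d ^ m) * (Real.cosh x - 1))) '' Set.Ici 0)) ^ n) := by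
  obtain ⟨M, rfl⟩ := hm_even.two_dvd
  have hM : 1 ≤ M := by omega
  simp only [Nat.mul_div_cancel_left M two_pos] at hμnonneg hmom ⊢
  have hbound (x : ℝ) (hx : 0 ≤ x) : μ {ω | ∃ k, 1 ≤ k ∧ k ≤ n ∧ α * n ≤ |X k ω - X 0 ω|} ≤
      ENNReal.ofReal (2 * (exp (-(α / d) * x)
        * evenMomentBound (fun l => μmom (2 * l) / d ^ (2 * l)) M x) ^ n) := by
    have hstep (k : ℕ) : ∀ᵐ ω ∂μ, |X (k + 1) ω - X k ω| ≤ d := by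
      simpa using hbdd (k + 1) k.succ_pos
    have hcosh (k : ℕ) : ∀ᵐ ω ∂μ, μ[fun ω => cosh (x / d * (X (k + 1) ω - X k ω))|F k] ω
        ≤ evenMomentBound (fun l => μmom (2 * l) / d ^ (2 * l)) M x := by
      have h := condExp_cosh_mul_le_evenMomentBound (F.le k)
        (hmart.stronglyAdapted.aestronglyMeasurable_sub (k + 1) k) hd (hstep k) hM
        (fun l hl => by
          simpa [Filter.EventuallyLE] using hmom (k + 1) k.succ_pos l (Finset.mem_Ico.1 hl).1
            (Nat.lt_succ_iff.1 (Finset.mem_Ico.1 hl).2)) (x / d)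
      rwa [div_mul_cancel₀ x hd.ne'] at h
    have h := measure_exists_le_abs_sub_zero_le hmart.stronglyAdapted (div_nonneg hx hd.le) hstep
      (fun k => by
        simpa [← mul_neg] using hsymm (k + 1) k.succ_pos (fun y => exp (x / d * y)) (by fun_prop))
      hcosh (α * n) n
    refine (measure_mono ?_).trans (h.trans_eq ?_)
    · rintro ω ⟨k, -, hk, hω⟩
      exact ⟨k, hk, hω⟩
    · rw [mul_pow, ← exp_nat_mul]
      ring_nf
  refine le_ofReal_apply_csInf (g := fun y => 2 * y ^ n)
    ⟨_, Set.mem_image_of_mem _ Set.self_mem_Ici⟩ ⟨0, ?_⟩ (by fun_prop) ?_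
  · rintro _ ⟨x, -, rfl⟩
    exact mul_nonneg (exp_pos _).le (zero_le_one.trans (one_le_evenMomentBound hM (fun l hl =>
      div_nonneg (hμnonneg l (Finset.mem_Ico.1 hl).1 (Nat.lt_succ_iff.1 (Finset.mem_Ico.1 hl).2))
        (by positivity)) x))
  · rintro _ ⟨x, hx, rfl⟩
    exact hbound x hx

/-- Theorem 3: exponential bound for conditionally symmetric martingales with bounded jumps,
taking into account conditional moments of even orders up to `m`. -/
theorem conditionally_symmetric_martingale_moment_bound
    {Ω : Type*} {m0 : MeasurableSpace Ω} {μ : Measure Ω} [IsProbabilityMeasure μ]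
    {F : Filtration ℕ m0} {X : ℕ → Ω → ℝ}
    (hmart : Martingale X F μ)
    (hsymm : ∀ k : ℕ, 1 ≤ k → ∀ g : ℝ → ℝ, Measurable g →
      μ[fun ω => g (X k ω - X (k - 1) ω) | F (k - 1)]
        =ᵐ[μ] μ[fun ω => g (-(X k ω - X (k - 1) ω)) | F (k - 1)])
    {m : ℕ} (hm_even : Even m) (hm_pos : 0 < m)
    {d : ℝ} (hd : 0 < d) {μmom : ℕ → ℝ}
    (hμnonneg : ∀ l, 1 ≤ l → l ≤ m / 2 → 0 ≤ μmom (2 * l))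
    (hbdd : ∀ k : ℕ, 1 ≤ k → ∀ᵐ ω ∂μ, |X k ω - X (k - 1) ω| ≤ d)
    (hmom : ∀ k : ℕ, 1 ≤ k → ∀ l, 1 ≤ l → l ≤ m / 2 → ∀ᵐ ω ∂μ,
      (μ[fun ω => (X k ω - X (k - 1) ω) ^ (2 * l) | F (k - 1)]) ω ≤ μmom (2 * l))
    {α : ℝ} (hα : 0 ≤ α) (n : ℕ) (hn : 1 ≤ n) :
    μ {ω | ∃ k, 1 ≤ k ∧ k ≤ n ∧ α * n ≤ |X k ω - X 0 ω|}
      ≤ ENNReal.ofReal (2 *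
          (sInf ((fun x : ℝ => Real.exp (-(α / d) * x) *
            (1 + (∑ l ∈ Finset.Icc 1 (m / 2 - 1),
                (μmom (2 * l) / d ^ (2 * l) - μmom m / d ^ m) * x ^ (2 * l)
                  / (Nat.factorial (2 * l)))
              + (μmom m / d ^ m) * (Real.cosh x - 1))) '' Set.Ici 0)) ^ n) :=
  conditionally_symmetric_martingale_moment_bound_general hmart hsymm hm_even hm_pos hd hμnonneg
    hbdd hmom n
end

section
/- Let {X_n, F_n}_{n≥0} be a discrete-time real-valued conditionally symmetric martingale whose jumps ξ_k = X_k − X_{k−1} satisfy ξ_k ≤ d almost surely for every k ≥ 1, for some fixed d > 0. Let Q_n = Σ_{k=1}^n E[ξ_k² | F_{k−1}] (with Q_0 = 0) be the predictable quadratic variation. Then for every z, r > 0, P( max_{1≤k≤n} (X_k − X_0) ≥ z and Q_n ≤ r for some n ≥ 1 ) ≤ exp( −(z²/(2r)) · C(zd/r) ), where C(u) = 2[u·arcsinh(u) − √(1+u²) + 1]/u² for u > 0. -/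
/-!
For `L ≥ 0` and `c = (cosh (L d) - 1) / d²`, the process `exp (L (Xₙ - X₀) - c Qₙ)` is a
nonnegative supermartingale started at `1`. Indeed, conditional symmetry together with `ξₖ ≤ d`
forces `|ξₖ| ≤ d`, and it turns `E[exp (L ξₖ) | Fₖ₋₁]` into `E[cosh (L ξₖ) | Fₖ₋₁]`, which is at
most `1 + c E[ξₖ² | Fₖ₋₁] ≤ exp (c E[ξₖ² | Fₖ₋₁])` because `(cosh y - 1) / y²` increases with `|y|`.
On the event in question this supermartingale reaches `exp (L z - c r)`, so Ville's maximal
inequality bounds its probability by `exp (-(L z - c r))`; the optimal `L = arsinh (z d / r) / d`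
gives the exponent `-(z² / (2 r)) C(z d / r)`.
-/

open MeasureTheory ProbabilityTheory Filter Set

/-- The function `C(u) = 2[u·arcsinh(u) − √(1+u²) + 1]/u²` for `u > 0`. -/
noncomputable def Cfun (u : ℝ) : ℝ :=
  2 * (u * Real.arsinh u - Real.sqrt (1 + u ^ 2) + 1) / u ^ 2

open Real

lemma Real.convexOn_sinh_Ici : ConvexOn ℝ (Ici 0) sinh := by
  refine convexOn_of_deriv2_nonneg' (convex_Ici 0) differentiable_sinh.differentiableOn
    (by rw [deriv_sinh]; exact differentiable_cosh.differentiableOn) fun x hx => ?_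
  simp only [Function.iterate_succ, Function.iterate_zero, Function.comp_apply, id, deriv_sinh,
    deriv_cosh]
  exact sinh_nonneg_iff.2 hx

lemma Real.sinh_mul_le_mul_sinh {a y : ℝ} (ha₀ : 0 ≤ a) (ha₁ : a ≤ 1) (hy : 0 ≤ y) :
    sinh (a * y) ≤ a * sinh y := by
  simpa using convexOn_sinh_Ici.2 (mem_Ici.2 hy) (mem_Ici.2 le_rfl) ha₀ (sub_nonneg.2 ha₁)
    (add_sub_cancel a 1)

lemma Real.cosh_mul_sub_one_le {a : ℝ} (ha₀ : 0 ≤ a) (ha₁ : a ≤ 1) (t : ℝ) :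
    cosh (a * t) - 1 ≤ a ^ 2 * (cosh t - 1) := by
  have cosh_two_mul_sub_one (y : ℝ) : cosh (2 * y) - 1 = 2 * sinh y ^ 2 := by
    rw [cosh_two_mul, cosh_sq']; ring
  obtain ⟨y, hy, ht⟩ : ∃ y, 0 ≤ y ∧ |t| = 2 * y := ⟨|t| / 2, by positivity, by ring⟩
  rw [← cosh_abs t, ← cosh_abs (a * t), abs_mul, abs_of_nonneg ha₀, ht, mul_left_comm,
    cosh_two_mul_sub_one, cosh_two_mul_sub_one]
  have h := pow_le_pow_left₀ (sinh_nonneg_iff.2 (by positivity))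
    (sinh_mul_le_mul_sinh ha₀ ha₁ hy) 2
  linear_combination 2 * h

lemma Real.cosh_mul_le_one_add_mul_sq {x D : ℝ} (hx : |x| ≤ D) (L : ℝ) :
    cosh (L * x) ≤ 1 + (cosh (L * D) - 1) / D ^ 2 * x ^ 2 := by
  obtain rfl | hD := ((abs_nonneg x).trans hx).eq_or_lt
  · simp [abs_nonpos_iff.1 hx]
  have h := cosh_mul_sub_one_le (by positivity) ((div_le_one hD).2 hx) (L * D)
  have hLx : |x| / D * (L * D) = L * |x| := by field_simp
  have hcosh : cosh (L * |x|) = cosh (L * x) := by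
    rcases abs_choice x with h | h <;> simp [h]
  rw [hLx, hcosh, div_pow, sq_abs] at h
  linarith [show x ^ 2 / D ^ 2 * (cosh (L * D) - 1) = (cosh (L * D) - 1) / D ^ 2 * x ^ 2 by ring]

def IsCondSymmetric {Ω : Type*} (m : MeasurableSpace Ω) {m0 : MeasurableSpace Ω}
    (μ : Measure[m0] Ω) (f : Ω → ℝ) : Prop :=
  ∀ g : ℝ → ℝ, Measurable g → μ[fun ω => g (f ω) | m] =ᵐ[μ] μ[fun ω => g (-f ω) | m]

section CondSymmetric

variable {Ω : Type*} {m m0 : MeasurableSpace Ω} {μ : Measure Ω} {f : Ω → ℝ}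

lemma IsCondSymmetric.ae_neg_le [IsFiniteMeasure μ] (hf : IsCondSymmetric m μ f) (hm : m ≤ m0)
    (hfm : Measurable f) {d : ℝ} (hd : ∀ᵐ ω ∂μ, f ω ≤ d) : ∀ᵐ ω ∂μ, -d ≤ f ω := by
  set g : ℝ → ℝ := (Ioi d).indicator 1
  have hg : Measurable g := measurable_const.indicator measurableSet_Ioi
  have hg_int : Integrable (fun ω => g (-f ω)) μ :=
    (integrable_const (1 : ℝ)).mono (hg.comp hfm.neg).aestronglyMeasurable
      (ae_of_all _ fun _ => norm_indicator_le_norm_self _ _)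
  have hg_zero : (fun ω => g (f ω)) =ᵐ[μ] 0 := by
    filter_upwards [hd] with ω hω
    simp [g, hω.not_gt]
  have hcond : μ[fun ω => g (-f ω) | m] =ᵐ[μ] 0 :=
    (hf g hg).symm.trans ((condExp_congr_ae hg_zero).trans (by rw [condExp_zero]))
  have hint : ∫ ω, g (-f ω) ∂μ = 0 := by
    rw [← integral_condExp hm, integral_congr_ae hcond, integral_zero']
  filter_upwards [(integral_eq_zero_iff_of_nonneg (fun _ => indicator_nonneg (by simp) _)
    hg_int).1 hint] with ω hω
  by_contra! h
  simp [indicator_of_mem (show -f ω ∈ Ioi d by simp; linarith)] at hω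

lemma IsCondSymmetric.condExp_exp_mul_ae_eq_condExp_cosh (hf : IsCondSymmetric m μ f) (L : ℝ)
    (hpos : Integrable (fun ω => exp (L * f ω)) μ)
    (hneg : Integrable (fun ω => exp (-(L * f ω))) μ) :
    μ[fun ω => exp (L * f ω) | m] =ᵐ[μ] μ[fun ω => cosh (L * f ω) | m] := by
  have hsymm : μ[fun ω => exp (-(L * f ω)) | m] =ᵐ[μ] μ[fun ω => exp (L * f ω) | m] := by
    simpa only [mul_neg] using (hf (fun x => exp (L * x)) (by fun_prop)).symm
  have hcosh : (fun ω => cosh (L * f ω)) =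
      (2⁻¹ : ℝ) • ((fun ω => exp (L * f ω)) + fun ω => exp (-(L * f ω))) := by
    ext ω; simp only [cosh_eq, Pi.smul_apply, Pi.add_apply, smul_eq_mul]; ring
  rw [hcosh]
  filter_upwards [condExp_smul (μ := μ) (2⁻¹ : ℝ)
      ((fun ω => exp (L * f ω)) + fun ω => exp (-(L * f ω))) m,
    condExp_add hpos hneg m, hsymm] with ω h₁ h₂ h₃
  simp only [h₁, Pi.smul_apply, h₂, Pi.add_apply, h₃, smul_eq_mul]
  ring

lemma IsCondSymmetric.condExp_exp_mul_le [IsFiniteMeasure μ] (hf : IsCondSymmetric m μ f)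
    (hm : m ≤ m0) (hfm : Measurable f) {D : ℝ} (hD : ∀ᵐ ω ∂μ, |f ω| ≤ D) (L : ℝ) :
    μ[fun ω => exp (L * f ω) | m]
      ≤ᵐ[μ] fun ω => exp ((cosh (L * D) - 1) / D ^ 2 * μ[fun ω => f ω ^ 2 | m] ω) := by
  set c := (cosh (L * D) - 1) / D ^ 2
  have hexp_int (s : ℝ) : Integrable (fun ω => exp (s * f ω)) μ := by
    refine Integrable.of_bound (by fun_prop) (exp (|s| * D)) ?_
    filter_upwards [hD] with ω hω
    rw [norm_of_nonneg (exp_pos _).le, exp_le_exp]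
    calc s * f ω ≤ |s * f ω| := le_abs_self _
      _ = |s| * |f ω| := abs_mul _ _
      _ ≤ |s| * D := mul_le_mul_of_nonneg_left hω (abs_nonneg s)
  have hsq_int : Integrable (fun ω => f ω ^ 2) μ := by
    refine Integrable.of_bound (by fun_prop) (D ^ 2) ?_
    filter_upwards [hD] with ω hω
    rw [norm_pow, Real.norm_eq_abs]
    exact pow_le_pow_left₀ (abs_nonneg _) hω 2
  have hcosh_le : (fun ω => cosh (L * f ω)) ≤ᵐ[μ] fun ω => 1 + c * f ω ^ 2 := by
    filter_upwards [hD] with ω hω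
    exact cosh_mul_le_one_add_mul_sq hω L
  have hcond_quadratic : μ[fun ω => 1 + c * f ω ^ 2 | m]
      =ᵐ[μ] fun ω => 1 + c * μ[fun ω => f ω ^ 2 | m] ω := by
    have : (fun ω => 1 + c * f ω ^ 2) = (fun _ => (1 : ℝ)) + c • fun ω => f ω ^ 2 := rfl
    rw [this]
    filter_upwards [condExp_add (integrable_const 1) (hsq_int.smul c) m,
      condExp_smul (μ := μ) c (fun ω => f ω ^ 2) m] with ω h₁ h₂
    rw [h₁, Pi.add_apply, h₂, condExp_const hm]
    rfl
  calc μ[fun ω => exp (L * f ω) | m]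
      =ᵐ[μ] μ[fun ω => cosh (L * f ω) | m] :=
        hf.condExp_exp_mul_ae_eq_condExp_cosh L (hexp_int L) (by simpa using hexp_int (-L))
    _ ≤ᵐ[μ] μ[fun ω => 1 + c * f ω ^ 2 | m] :=
        condExp_mono (by simpa only [cosh_eq, neg_mul, Pi.add_apply] using
          ((hexp_int L).add (hexp_int (-L))).div_const 2)
          ((integrable_const 1).add (hsq_int.const_mul c)) hcosh_le
    _ =ᵐ[μ] fun ω => 1 + c * μ[fun ω => f ω ^ 2 | m] ω := hcond_quadratic
    _ ≤ᵐ[μ] _ := ae_of_all _ fun ω => by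
        linarith [add_one_le_exp (c * μ[fun ω => f ω ^ 2 | m] ω)]

end CondSymmetric

section ExpSupermartingale

variable {Ω : Type*} {m0 : MeasurableSpace Ω} {μ : Measure Ω} {F : Filtration ℕ m0}
  {X V : ℕ → Ω → ℝ} {L c : ℝ}

noncomputable def expCompensated (X V : ℕ → Ω → ℝ) (L c : ℝ) (n : ℕ) (ω : Ω) : ℝ :=
  exp (L * (X n ω - X 0 ω) - c * ∑ k ∈ Finset.Icc 1 n, V k ω)

lemma expCompensated_zero : expCompensated X V L c 0 = 1 := by
  ext ω; simp [expCompensated]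

lemma expCompensated_succ (n : ℕ) (ω : Ω) :
    expCompensated X V L c (n + 1) ω = expCompensated X V L c n ω *
      exp (-(c * V (n + 1) ω)) * exp (L * (X (n + 1) ω - X n ω)) := by
  simp only [expCompensated, Finset.sum_Icc_succ_top (Nat.le_add_left 1 n), ← exp_add]
  ring_nf

lemma expCompensated_pos (n : ℕ) (ω : Ω) : 0 < expCompensated X V L c n ω := exp_pos _

lemma exp_le_expCompensated {ω : Ω} (hL : 0 ≤ L) (hc : 0 ≤ c) (hV : ∀ k, 0 ≤ V k ω)
    {k n : ℕ} (hkn : k ≤ n) {z r : ℝ} (hz : z ≤ X k ω - X 0 ω)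
    (hr : ∑ i ∈ Finset.Icc 1 n, V i ω ≤ r) :
    exp (L * z - c * r) ≤ expCompensated X V L c k ω := by
  have hsum : ∑ i ∈ Finset.Icc 1 k, V i ω ≤ ∑ i ∈ Finset.Icc 1 n, V i ω :=
    Finset.sum_le_sum_of_subset_of_nonneg (Finset.Icc_subset_Icc le_rfl hkn) fun i _ _ => hV i
  rw [expCompensated, exp_le_exp]
  linarith [mul_le_mul_of_nonneg_left hz hL, mul_le_mul_of_nonneg_left (hsum.trans hr) hc]

lemma stronglyMeasurable_expCompensated (hX : StronglyAdapted F X)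
    (hV : ∀ n, StronglyMeasurable[F n] (V (n + 1))) (n : ℕ) :
    StronglyMeasurable[F n] (expCompensated X V L c n) := by
  induction n with
  | zero => rw [expCompensated_zero]; exact stronglyMeasurable_const
  | succ n ih =>
    have hle := F.mono (Nat.le_succ n)
    have hjump : Measurable[F (n + 1)] fun ω => X (n + 1) ω - X n ω :=
      (hX (n + 1)).measurable.sub ((hX n).mono hle).measurable
    rw [funext (expCompensated_succ n)]
    exact ((ih.mono hle).mul (((hV n).mono hle).measurable.const_mul c).neg.exp.stronglyMeasurable)
      |>.mul (hjump.const_mul L).exp.stronglyMeasurable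

lemma integrable_exp_mul_sub_of_le [IsFiniteMeasure μ] (hX : StronglyAdapted F X) (hL : 0 ≤ L)
    {d : ℝ} {n : ℕ} (hd : ∀ᵐ ω ∂μ, X (n + 1) ω - X n ω ≤ d) :
    Integrable (fun ω => exp (L * (X (n + 1) ω - X n ω))) μ := by
  have hXm (k : ℕ) : Measurable (X k) := ((hX k).mono (F.le k)).measurable
  refine Integrable.of_bound (by fun_prop) (exp (L * d)) ?_
  filter_upwards [hd] with ω hω
  rw [norm_of_nonneg (exp_pos _).le]
  exact exp_le_exp.2 (mul_le_mul_of_nonneg_left hω hL)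

lemma integrable_expCompensated [IsFiniteMeasure μ] (hX : StronglyAdapted F X)
    (hV : ∀ n, StronglyMeasurable[F n] (V (n + 1))) (hV0 : ∀ n, 0 ≤ᵐ[μ] V (n + 1))
    (hL : 0 ≤ L) (hc : 0 ≤ c) {d : ℝ} (hd : ∀ n, ∀ᵐ ω ∂μ, X (n + 1) ω - X n ω ≤ d) (n : ℕ) :
    Integrable (expCompensated X V L c n) μ := by
  induction n with
  | zero => rw [expCompensated_zero]; exact integrable_const 1
  | succ n ih =>
    refine (ih.const_mul (exp (L * d))).mono'
      ((stronglyMeasurable_expCompensated hX hV (n + 1)).mono (F.le _)).aestronglyMeasurable ?_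
    filter_upwards [hV0 n, hd n] with ω hV hjump
    have hpos := expCompensated_pos (X := X) (V := V) (L := L) (c := c) n ω
    rw [expCompensated_succ, norm_of_nonneg (by positivity)]
    calc expCompensated X V L c n ω * exp (-(c * V (n + 1) ω)) * exp (L * (X (n + 1) ω - X n ω))
        ≤ expCompensated X V L c n ω * 1 * exp (L * d) := by
          gcongr
          exact exp_le_one_iff.2 (neg_nonpos.2 (mul_nonneg hc hV))
      _ = exp (L * d) * expCompensated X V L c n ω := by ring

lemma supermartingale_expCompensated [IsFiniteMeasure μ] (hX : StronglyAdapted F X)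
    (hV : ∀ n, StronglyMeasurable[F n] (V (n + 1))) (hV0 : ∀ n, 0 ≤ᵐ[μ] V (n + 1))
    (hL : 0 ≤ L) (hc : 0 ≤ c) {d : ℝ} (hd : ∀ n, ∀ᵐ ω ∂μ, X (n + 1) ω - X n ω ≤ d)
    (hmgf : ∀ n, μ[fun ω => exp (L * (X (n + 1) ω - X n ω)) | F n]
      ≤ᵐ[μ] fun ω => exp (c * V (n + 1) ω)) :
    Supermartingale (expCompensated X V L c) F μ := by
  set Y := expCompensated X V L c
  have hYint := integrable_expCompensated hX hV hV0 hL hc hd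
  refine supermartingale_nat (stronglyMeasurable_expCompensated hX hV) hYint fun n => ?_
  have hprod : Y (n + 1) = (fun ω => Y n ω * exp (-(c * V (n + 1) ω))) *
      fun ω => exp (L * (X (n + 1) ω - X n ω)) := funext (expCompensated_succ n)
  have hfactor : StronglyMeasurable[F n] fun ω => Y n ω * exp (-(c * V (n + 1) ω)) :=
    (stronglyMeasurable_expCompensated hX hV n).mul
      ((hV n).measurable.const_mul c).neg.exp.stronglyMeasurable
  rw [hprod]
  filter_upwards [condExp_mul_of_stronglyMeasurable_left hfactor (hprod ▸ hYint (n + 1))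
    (integrable_exp_mul_sub_of_le hX hL (hd n)), hmgf n] with ω hpull hmgfω
  have hY : 0 < Y n ω := expCompensated_pos n ω
  calc _ = Y n ω * exp (-(c * V (n + 1) ω)) *
        μ[fun ω => exp (L * (X (n + 1) ω - X n ω)) | F n] ω := hpull
    _ ≤ Y n ω * exp (-(c * V (n + 1) ω)) * exp (c * V (n + 1) ω) := by gcongr
    _ = Y n ω := by rw [mul_assoc, ← exp_add, neg_add_cancel, exp_zero, mul_one]

end ExpSupermartingale

section Ville

variable {Ω : Type*} {m0 : MeasurableSpace Ω} {μ : Measure Ω} [IsFiniteMeasure μ]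
  {F : Filtration ℕ m0} {Y : ℕ → Ω → ℝ}

lemma MeasureTheory.Supermartingale.measure_exists_le_le (hY : Supermartingale Y F μ)
    (hY0 : ∀ n ω, 0 ≤ Y n ω) {a : ℝ} (ha : 0 < a) :
    μ {ω | ∃ n, a ≤ Y n ω} ≤ ENNReal.ofReal (μ[Y 0] / a) := by
  have hfin (N : ℕ) : μ {ω | ∃ n ≤ N, a ≤ Y n ω} ≤ ENNReal.ofReal (μ[Y 0] / a) := by
    let σ : Ω → ℕ∞ := fun ω => (hittingBtwn Y (Ici a) 0 N ω : ℕ)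
    have hσ : IsStoppingTime F σ :=
      hY.stronglyAdapted.adapted.isStoppingTime_hittingBtwn measurableSet_Ici
    have hσN (ω : Ω) : σ ω ≤ N := WithTop.coe_le_coe.2 (hittingBtwn_le ω)
    have hint : Integrable (stoppedValue Y σ) μ := integrable_stoppedValue ℕ hσ hY.integrable hσN
    have hopt : μ[stoppedValue Y σ] ≤ μ[Y 0] := by
      have h := hY.neg.expected_stoppedValue_mono (isStoppingTime_const F 0) hσ
        (fun _ => zero_le) hσN
      rw [stoppedValue_const] at h
      simpa [stoppedValue, integral_neg] using h
    have hmarkov := mul_meas_ge_le_integral_of_nonneg (ae_of_all _ fun ω => hY0 _ ω) hint a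
    have hsub : {ω | ∃ n ≤ N, a ≤ Y n ω} ⊆ {ω | a ≤ stoppedValue Y σ ω} :=
      fun ω ⟨n, hn, hYn⟩ => stoppedValue_hittingBtwn_mem ⟨n, ⟨zero_le, hn⟩, hYn⟩
    calc μ {ω | ∃ n ≤ N, a ≤ Y n ω} ≤ μ {ω | a ≤ stoppedValue Y σ ω} := measure_mono hsub
      _ = ENNReal.ofReal (μ.real {ω | a ≤ stoppedValue Y σ ω}) := (ofReal_measureReal).symm
      _ ≤ ENNReal.ofReal (μ[Y 0] / a) :=
        ENNReal.ofReal_le_ofReal ((le_div_iff₀' ha).2 (hmarkov.trans hopt))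
  have hunion : {ω | ∃ n, a ≤ Y n ω} = ⋃ N, {ω | ∃ n ≤ N, a ≤ Y n ω} := by
    ext ω
    simp only [mem_ofPred_eq, mem_iUnion]
    exact ⟨fun ⟨n, hn⟩ => ⟨n, n, le_rfl, hn⟩, fun ⟨_, n, _, hn⟩ => ⟨n, hn⟩⟩
  have hmono : Monotone fun N => {ω | ∃ n ≤ N, a ≤ Y n ω} :=
    fun _ _ hN _ ⟨n, hn, hYn⟩ => ⟨n, hn.trans hN, hYn⟩
  rw [hunion, hmono.measure_iUnion]
  exact iSup_le hfin

end Ville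

theorem measure_exists_le_sub_and_sum_condExp_sq_le_le {Ω : Type*} {m0 : MeasurableSpace Ω}
    {μ : Measure Ω} [IsProbabilityMeasure μ] {F : Filtration ℕ m0} {X : ℕ → Ω → ℝ}
    (hX : StronglyAdapted F X) (hsymm : ∀ n, IsCondSymmetric (F n) μ fun ω => X (n + 1) ω - X n ω)
    {d : ℝ} (hbdd : ∀ n, ∀ᵐ ω ∂μ, X (n + 1) ω - X n ω ≤ d) {z r L : ℝ} (hL : 0 ≤ L) :
    μ {ω | ∃ n : ℕ, 1 ≤ n ∧ (∃ k, 1 ≤ k ∧ k ≤ n ∧ z ≤ X k ω - X 0 ω) ∧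
        (∑ k ∈ Finset.Icc 1 n,
          (μ[fun ω' => (X k ω' - X (k - 1) ω') ^ 2 | F (k - 1)]) ω) ≤ r}
      ≤ ENNReal.ofReal (exp (-(L * z - (cosh (L * d) - 1) / d ^ 2 * r))) := by
  set V : ℕ → Ω → ℝ := fun k => μ[fun ω => (X k ω - X (k - 1) ω) ^ 2 | F (k - 1)]
  set c := (cosh (L * d) - 1) / d ^ 2
  have hc : 0 ≤ c := div_nonneg (sub_nonneg.2 (one_le_cosh _)) (sq_nonneg d)
  have hXm (n : ℕ) : Measurable (X n) := ((hX n).mono (F.le n)).measurable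
  have habs (n : ℕ) : ∀ᵐ ω ∂μ, |X (n + 1) ω - X n ω| ≤ d := by
    filter_upwards [hbdd n, (hsymm n).ae_neg_le (F.le n) ((hXm _).sub (hXm _)) (hbdd n)]
      with ω h₁ h₂
    exact abs_le.2 ⟨h₂, h₁⟩
  have hV0 : ∀ᵐ ω ∂μ, ∀ k, 0 ≤ V k ω :=
    ae_all_iff.2 fun k => condExp_nonneg (ae_of_all _ fun ω => sq_nonneg _)
  have hsuper : Supermartingale (expCompensated X V L c) F μ :=
    supermartingale_expCompensated hX (fun _ => stronglyMeasurable_condExp)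
      (fun n => hV0.mono fun _ h => h (n + 1)) hL hc hbdd
      fun n => (hsymm n).condExp_exp_mul_le (F.le n) ((hXm _).sub (hXm _)) (habs n) L
  calc μ _ ≤ μ {ω | ∃ n, exp (L * z - c * r) ≤ expCompensated X V L c n ω} := by
        refine measure_mono_ae ?_
        filter_upwards [hV0] with ω hω hmem
        obtain ⟨n, -, ⟨k, -, hkn, hz⟩, hr⟩ := hmem
        exact ⟨k, exp_le_expCompensated hL hc hω hkn hz hr⟩
    _ ≤ ENNReal.ofReal (μ[expCompensated X V L c 0] / exp (L * z - c * r)) :=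
        hsuper.measure_exists_le_le (fun n ω => (expCompensated_pos n ω).le) (exp_pos _)
    _ = ENNReal.ofReal (exp (-(L * z - c * r))) := by
        rw [expCompensated_zero, exp_neg]
        simp

lemma sq_div_mul_Cfun_eq {d z r : ℝ} (hd : 0 < d) (hz : 0 < z) (hr : 0 < r) :
    z ^ 2 / (2 * r) * Cfun (z * d / r) =
      arsinh (z * d / r) / d * z - (cosh (arsinh (z * d / r) / d * d) - 1) / d ^ 2 * r := by
  rw [div_mul_cancel₀ _ hd.ne', cosh_arsinh, Cfun]
  field_simp
  ring

/-- Theorem 4: Freedman-type inequality for conditionally symmetric martingales with jumps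
bounded above by `d`, in terms of the predictable quadratic variation. -/
theorem conditionally_symmetric_martingale_freedman_bound
    {Ω : Type*} {m0 : MeasurableSpace Ω} {μ : Measure Ω} [IsProbabilityMeasure μ]
    {F : Filtration ℕ m0} {X : ℕ → Ω → ℝ}
    (hmart : Martingale X F μ)
    (hsymm : ∀ k : ℕ, 1 ≤ k → ∀ g : ℝ → ℝ, Measurable g →
      μ[fun ω => g (X k ω - X (k - 1) ω) | F (k - 1)]
        =ᵐ[μ] μ[fun ω => g (-(X k ω - X (k - 1) ω)) | F (k - 1)])
    {d : ℝ} (hd : 0 < d)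
    (hbdd : ∀ k : ℕ, 1 ≤ k → ∀ᵐ ω ∂μ, X k ω - X (k - 1) ω ≤ d)
    {z r : ℝ} (hz : 0 < z) (hr : 0 < r) :
    μ {ω | ∃ n : ℕ, 1 ≤ n ∧ (∃ k, 1 ≤ k ∧ k ≤ n ∧ z ≤ X k ω - X 0 ω) ∧
        (∑ k ∈ Finset.Icc 1 n,
          (μ[fun ω' => (X k ω' - X (k - 1) ω') ^ 2 | F (k - 1)]) ω) ≤ r}
      ≤ ENNReal.ofReal (Real.exp (-(z ^ 2 / (2 * r)) * Cfun (z * d / r))) := by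
  have hL : 0 ≤ arsinh (z * d / r) / d := div_nonneg (arsinh_nonneg_iff.2 (by positivity)) hd.le
  rw [neg_mul, sq_div_mul_Cfun_eq hd hz hr]
  exact measure_exists_le_sub_and_sum_condExp_sq_le_le hmart.stronglyAdapted
    (fun n => hsymm (n + 1) n.succ_pos) (fun n => hbdd (n + 1) n.succ_pos) hL
end
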